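/- arXiv:1603.03077 — 4 statements merged into one kernel-verified Lean document; each statement's English description precedes it below -/
import Mathlib

section
/- Let f : [a,b] → ℝ be continuous, c ∈ [a,b], and suppose there is a finite set a ≤ t_j < t_{j+1} < … < t_ℓ ≤ b with the following properties: f([a,c]) is contained in the 2δ'-neighborhood of the interval [f(t_j), f(t_i)] and f([c,b]) is contained in the 2δ'-neighborhood of the interval [f(t_{i+1}), f(t_ℓ)], where the values f(t_j) < f(t_{j+1}) < … < f(t_ℓ) are strictly monotone and t_i ≤ c < t_{i+1}. Then the Lebesgue measure of f([a,c]) ∩ f([c,b]) is at most 4δ'. -/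
/-! Every value of `f` on `[a, c]` lies below `f (tᵢ) + 2δ` and every value on `[c, b]` lies above
`f (tᵢ₊₁) - 2δ`, so the overlap sits in an interval of length `f (tᵢ) - f (tᵢ₊₁) + 4δ`, and
`f (tᵢ) < f (tᵢ₊₁)` by monotonicity along the `t`'s. -/

open Set MeasureTheory

lemma subset_Icc_of_abs_sub_le {p q r : ℝ} :
    {y : ℝ | ∃ z ∈ Icc p q, |y - z| ≤ r} ⊆ Icc (p - r) (q + r) := by
  rintro y ⟨z, ⟨hpz, hzq⟩, hyz⟩
  obtain ⟨hlo, hhi⟩ := abs_le.mp hyz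
  exact ⟨by linarith, by linarith⟩

lemma volume_inter_le_of_subset_Iic_of_subset_Ici {s t : Set ℝ} {u v : ℝ}
    (hs : s ⊆ Iic u) (ht : t ⊆ Ici v) : volume (s ∩ t) ≤ ENNReal.ofReal (u - v) :=
  calc volume (s ∩ t) ≤ volume (Icc v u) :=
        measure_mono fun _ hy ↦ ⟨ht hy.2, hs hy.1⟩
    _ = ENNReal.ofReal (u - v) := Real.volume_Icc

theorem stmt_8_general (a b c : ℝ)
    (f : ℝ → ℝ)
    (δ : ℝ)
    (n : ℕ) (t : Fin (n + 1) → ℝ)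
    (hmono : StrictMono (f ∘ t))
    (i : Fin n)
    (h1 : f '' Set.Icc a c ⊆
      {y | ∃ z ∈ Set.Icc (f (t 0)) (f (t i.castSucc)), |y - z| ≤ 2 * δ})
    (h2 : f '' Set.Icc c b ⊆
      {y | ∃ z ∈ Set.Icc (f (t i.succ)) (f (t (Fin.last n))), |y - z| ≤ 2 * δ}) :
    MeasureTheory.volume (f '' Set.Icc a c ∩ f '' Set.Icc c b)
      ≤ ENNReal.ofReal (4 * δ) := by
  have hgap : f (t i.castSucc) < f (t i.succ) := hmono Fin.castSucc_lt_succ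
  calc volume (f '' Icc a c ∩ f '' Icc c b)
      ≤ ENNReal.ofReal ((f (t i.castSucc) + 2 * δ) - (f (t i.succ) - 2 * δ)) :=
        volume_inter_le_of_subset_Iic_of_subset_Ici
          (fun _ hy ↦ (subset_Icc_of_abs_sub_le (h1 hy)).2)
          (fun _ hy ↦ (subset_Icc_of_abs_sub_le (h2 hy)).1)
    _ ≤ ENNReal.ofReal (4 * δ) := ENNReal.ofReal_le_ofReal (by linarith)

theorem stmt_8 (a b c : ℝ) (hac : a ≤ c) (hcb : c ≤ b)
    (f : ℝ → ℝ) (hf : ContinuousOn f (Set.Icc a b))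
    (δ : ℝ) (hδ : 0 < δ)
    (n : ℕ) (t : Fin (n + 1) → ℝ) (ht : StrictMono t)
    (htmem : ∀ j, t j ∈ Set.Icc a b)
    (hmono : StrictMono (f ∘ t))
    (i : Fin n)
    (hci : t i.castSucc ≤ c) (hci' : c < t i.succ)
    (h1 : f '' Set.Icc a c ⊆
      {y | ∃ z ∈ Set.Icc (f (t 0)) (f (t i.castSucc)), |y - z| ≤ 2 * δ})
    (h2 : f '' Set.Icc c b ⊆
      {y | ∃ z ∈ Set.Icc (f (t i.succ)) (f (t (Fin.last n))), |y - z| ≤ 2 * δ}) :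
    MeasureTheory.volume (f '' Set.Icc a c ∩ f '' Set.Icc c b)
      ≤ ENNReal.ofReal (4 * δ) :=
  stmt_8_general a b c f δ n t hmono i h1 h2
end

section
/- Define weights w_Q on a nested family Δ of cubes by the martingale rule: w_Q(Q) = diam(Q), and if Q' ∈ Δ with Q' ⊆ Q decomposes as Q' = R_{Q'} ∪ (∪_i Q'^i), set w_Q(Q'^i) = (w_Q(Q')/s') diam(Q'^i) and distribute mass w_Q(Q')·H¹(R_{Q'})/s' uniformly over R_{Q'}, where s' = H¹(R_{Q'}) + Σ_i diam(Q'^i). If for every Q' one has s' ≥ diam(Q')(1 + c₀ m^{-M}), then for any chain Q_N ⊆ Q_{N-1} ⊆ … ⊆ Q_1 of cubes, w_{Q_1}(Q_N)/diam(Q_N) ≤ q^{N-1} where q = 1/(1 + c₀ m^{-M}). Consequently Σ_{n ≥ 0} q^n ≤ 1 + m^M/c₀. -/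
/-!
At each level the mass `w k` of the current cube is spread over a total size `s k` that exceeds
`D k` by the factor `1 + ε`, so the density `w k / D k` shrinks by at least `q = 1 / (1 + ε)` per
level and is at most `q ^ k`. The series `∑ q ^ n` sums to `1 / (1 - q) = 1 + 1 / ε`.
-/

lemma div_le_one_div_one_add {D s ε : ℝ} (hD : 0 < D) (hε : 0 ≤ ε) (hs : D * (1 + ε) ≤ s) :
    D / s ≤ 1 / (1 + ε) := by
  have hs_pos : 0 < s := lt_of_lt_of_le (by positivity) hs
  rw [div_le_div_iff₀ hs_pos (by positivity)]
  linarith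

section Martingale

variable {D s w : ℕ → ℝ} {ε : ℝ}

lemma martingale_weight_nonneg (hD : ∀ k, 0 < D k) (hε : 0 ≤ ε) (hw0 : w 0 = D 0)
    (hrec : ∀ k, w (k + 1) = w k / s k * D (k + 1)) (hlow : ∀ k, D k * (1 + ε) ≤ s k) :
    ∀ n, 0 ≤ w n
  | 0 => hw0 ▸ (hD 0).le
  | k + 1 => by
    have hs : 0 ≤ s k := le_trans (mul_nonneg (hD k).le (by linarith)) (hlow k)
    rw [hrec k]
    exact mul_nonneg (div_nonneg (martingale_weight_nonneg hD hε hw0 hrec hlow k) hs)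
      (hD (k + 1)).le

lemma martingale_density_succ (hD : ∀ k, 0 < D k)
    (hrec : ∀ k, w (k + 1) = w k / s k * D (k + 1)) (k : ℕ) :
    w (k + 1) / D (k + 1) = D k / s k * (w k / D k) := by
  have := (hD k).ne'
  have := (hD (k + 1)).ne'
  rw [hrec k]
  field_simp

theorem martingale_density_le_pow (hD : ∀ k, 0 < D k) (hε : 0 ≤ ε) (hw0 : w 0 = D 0)
    (hrec : ∀ k, w (k + 1) = w k / s k * D (k + 1)) (hlow : ∀ k, D k * (1 + ε) ≤ s k) (n : ℕ) :
    w n / D n ≤ (1 / (1 + ε)) ^ n := by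
  have hstep : ∀ k < n, w (k + 1) / D (k + 1) ≤ 1 / (1 + ε) * (w k / D k) := fun k _ => by
    rw [martingale_density_succ hD hrec k]
    have hdensity : 0 ≤ w k / D k :=
      div_nonneg (martingale_weight_nonneg hD hε hw0 hrec hlow k) (hD k).le
    exact mul_le_mul_of_nonneg_right (div_le_one_div_one_add (hD k) hε (hlow k)) hdensity
  calc w n / D n ≤ (1 / (1 + ε)) ^ n * (w 0 / D 0) :=
        le_geom (u := fun k => w k / D k) (by positivity) n hstep
    _ = (1 / (1 + ε)) ^ n := by rw [hw0, div_self (hD 0).ne', mul_one]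

end Martingale

lemma tsum_one_div_one_add_pow {ε : ℝ} (hε : 0 < ε) :
    ∑' n : ℕ, (1 / (1 + ε)) ^ n = 1 + 1 / ε := by
  have hq : 1 / (1 + ε) < 1 := by rw [div_lt_one (by positivity)]; linarith
  rw [tsum_geometric_of_lt_one (by positivity) hq]
  have h1q : 1 - 1 / (1 + ε) = ε / (1 + ε) := by field_simp; ring
  rw [h1q, inv_div, add_div, div_self hε.ne', one_div, add_comm]

theorem stmt_13_general (c₀ : ℝ) (hc₀ : 0 < c₀)
    (m : ℕ) (hm : 2 ≤ m) (M : ℕ)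
    (D s w : ℕ → ℝ)
    (hD : ∀ k, 0 < D k)
    (hw0 : w 0 = D 0)
    (hrec : ∀ k, w (k + 1) = w k / s k * D (k + 1))
    (hlow : ∀ k, D k * (1 + c₀ * (m : ℝ) ^ (-(M : ℤ))) ≤ s k) :
    (∀ n : ℕ, w n / D n ≤ (1 / (1 + c₀ * (m : ℝ) ^ (-(M : ℤ)))) ^ n) ∧
    (∑' n : ℕ, (1 / (1 + c₀ * (m : ℝ) ^ (-(M : ℤ)))) ^ n)
      ≤ 1 + (m : ℝ) ^ (M : ℕ) / c₀ := by
  have hm_pos : (0 : ℝ) < m := by exact_mod_cast (by omega : 0 < m)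
  have hε : 0 < c₀ * (m : ℝ) ^ (-(M : ℤ)) := by positivity
  refine ⟨martingale_density_le_pow hD hε.le hw0 hrec hlow, ?_⟩
  rw [tsum_one_div_one_add_pow hε, zpow_neg, zpow_natCast, one_div, mul_inv, inv_inv, inv_mul_eq_div]

theorem stmt_13 (c₀ : ℝ) (hc₀ : 0 < c₀) (hc₀1 : c₀ < 1)
    (m : ℕ) (hm : 2 ≤ m) (M : ℕ)
    (D s w : ℕ → ℝ)
    (hD : ∀ k, 0 < D k) (hs : ∀ k, 0 < s k)
    (hw0 : w 0 = D 0)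
    (hrec : ∀ k, w (k + 1) = w k / s k * D (k + 1))
    (hlow : ∀ k, D k * (1 + c₀ * (m : ℝ) ^ (-(M : ℤ))) ≤ s k) :
    (∀ n : ℕ, w n / D n ≤ (1 / (1 + c₀ * (m : ℝ) ^ (-(M : ℤ)))) ^ n) ∧
    (∑' n : ℕ, (1 / (1 + c₀ * (m : ℝ) ^ (-(M : ℤ)))) ^ n)
      ≤ 1 + (m : ℝ) ^ (M : ℕ) / c₀ :=
  stmt_13_general c₀ hc₀ m hm M D s w hD hw0 hrec hlow
end

section
/- Let γ : [0,1] → X be a curve parametrized proportionally to arc length with image Γ, a compact connected set with H¹(Γ) < ∞, in a geodesic metric space. Then γ can be chosen Lipschitz with Lipschitz constant at most 32 H¹(Γ). -/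
/-!
For `ε > 0` take a maximal `ε`-separated set `S ⊆ Γ`. Since `Γ` is connected, a closed ball of
radius `ε / 2` centred in `Γ` has `H¹`-measure at least `ε / 2` (its image under the distance to
the centre contains `[0, ε / 2]`), and these balls are disjoint, so `#S * ε ≤ 2 H¹(Γ)`.
Connectedness also makes the graph on `S` joining points at distance `≤ 2ε` connected, so a
depth-first walk visits all of `S` in fewer than `2 #S` steps of length `≤ 2ε`. Run at constant
speed on `[0, 1]` as a step function, the walk is `8 H¹(Γ)`-Lipschitz up to an additive error
`2ε`, and `ε`-dense in `Γ`. A pointwise limit along an ultrafilter as `ε → 0` is then an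
`8 H¹(Γ)`-Lipschitz map of `[0, 1]` onto `Γ`.
-/

open MeasureTheory Set Filter Topology Metric
open scoped NNReal

theorem TotallyBounded.packingNumber_ne_top {X : Type*} [PseudoEMetricSpace X] {s : Set X}
    (hs : TotallyBounded s) {ε : ℝ≥0} (hε : ε ≠ 0) : packingNumber ε s ≠ ⊤ := by
  obtain ⟨N, -, hNfin, hN⟩ := exists_finite_isCover_of_totallyBounded (ε := ε / 2) (by simpa) hs
  refine ne_top_of_le_ne_top hNfin.encard_lt_top.ne ?_
  calc packingNumber ε s = packingNumber (2 * (ε / 2)) s := by rw [mul_div_cancel₀ _ two_ne_zero]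
    _ ≤ externalCoveringNumber (ε / 2) s := packingNumber_two_mul_le_externalCoveringNumber _ _
    _ ≤ N.encard := hN.externalCoveringNumber_le_encard

theorem TotallyBounded.exists_finset_isSeparated_isCover {X : Type*} [PseudoEMetricSpace X]
    {s : Set X} (hs : TotallyBounded s) {ε : ℝ≥0} (hε : ε ≠ 0) :
    ∃ S : Finset X, ↑S ⊆ s ∧ IsSeparated ε (S : Set X) ∧ IsCover ε s S := by
  have hpack := hs.packingNumber_ne_top hε
  have hfin : (maximalSeparatedSet ε s).Finite :=
    Set.encard_ne_top_iff.1 (by rwa [encard_maximalSeparatedSet hpack])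
  exact ⟨hfin.toFinset, by simpa using maximalSeparatedSet_subset,
    by simpa using isSeparated_maximalSeparatedSet,
    by simpa using isCover_maximalSeparatedSet hpack⟩

theorem Finset.exists_isChain_toFinset_eq {α : Type*} [DecidableEq α] {R : α → α → Prop}
    (hR : ∀ ⦃a b⦄, R a b → R b a) {S : Finset α} (hS : S.Nonempty)
    (hexp : ∀ V ⊆ S, V.Nonempty → V ≠ S → ∃ v ∈ V, ∃ s ∈ S, s ∉ V ∧ R v s) :
    ∃ l : List α, l.IsChain R ∧ l.toFinset = S ∧ l.length < 2 * S.card := by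
  suffices ∀ k < S.card, ∃ l : List α, l.IsChain R ∧ l.toFinset ⊆ S ∧
      l.toFinset.card = k + 1 ∧ l.length ≤ 2 * k + 1 by
    have hS₀ := hS.card_pos
    obtain ⟨l, hl, hlS, hcard, hlen⟩ := this (S.card - 1) (by omega)
    exact ⟨l, hl, Finset.eq_of_subset_of_card_le hlS (by omega), by omega⟩
  intro k hk
  induction k with
  | zero =>
    obtain ⟨x, hx⟩ := hS
    exact ⟨[x], .singleton x, by simpa, by simp, by simp⟩
  | succ k ih =>
    obtain ⟨l, hl, hlS, hcard, hlen⟩ := ih (by omega)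
    obtain ⟨v, hv, s, hs, hsl, hvs⟩ := hexp l.toFinset hlS
      (Finset.card_pos.1 (by omega)) (by rintro rfl; omega)
    obtain ⟨l₁, l₂, rfl⟩ := List.append_of_mem (List.mem_toFinset.1 hv)
    have hins : (l₁ ++ v :: s :: v :: l₂).toFinset = insert s (l₁ ++ v :: l₂).toFinset := by
      ext; simp
    refine ⟨l₁ ++ v :: s :: v :: l₂, ?_, hins ▸ Finset.insert_subset hs hlS, ?_, ?_⟩
    · rw [List.isChain_split] at hl
      simpa [hl.1, hl.2, hvs] using hR hvs
    · rw [hins, Finset.card_insert_of_notMem hsl, hcard]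
    · simp only [List.length_append, List.length_cons] at hlen ⊢
      omega

section

variable {X : Type*} [PseudoMetricSpace X]

theorem dist_comp_floor_le {w : ℕ → X} {m : ℕ} {c : ℝ} (hc : 0 ≤ c)
    (hw : ∀ i < m, dist (w i) (w (i + 1)) ≤ c) {a b : ℝ} (ha : a ∈ Icc 0 (m : ℝ))
    (hb : b ∈ Icc 0 (m : ℝ)) :
    dist (w ⌊a⌋₊) (w ⌊b⌋₊) ≤ c * |a - b| + c := by
  wlog hab : a ≤ b generalizing a b
  · rw [dist_comm, abs_sub_comm]
    exact this hb ha (le_of_not_ge hab)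
  have hfl : ⌊a⌋₊ ≤ ⌊b⌋₊ := Nat.floor_le_floor hab
  have hbm : ⌊b⌋₊ ≤ m := Nat.floor_le_of_le hb.2
  calc dist (w ⌊a⌋₊) (w ⌊b⌋₊) ≤ ∑ _i ∈ Finset.Ico ⌊a⌋₊ ⌊b⌋₊, c :=
        dist_le_Ico_sum_of_dist_le hfl fun _ hk => hw _ (by omega)
    _ = (⌊b⌋₊ - ⌊a⌋₊ : ℕ) * c := by simp
    _ ≤ (b - a + 1) * c := by
        gcongr
        rw [Nat.cast_sub hfl]
        linarith [Nat.floor_le hb.1, Nat.lt_floor_add_one a]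
    _ = c * |a - b| + c := by rw [abs_of_nonpos (by linarith)]; ring

theorem List.exists_curve_of_isChain {l : List X} (hl : l ≠ []) {c : ℝ} (hc : 0 ≤ c)
    (hchain : l.IsChain fun x y => dist x y ≤ c) :
    ∃ f : ℝ → X, MapsTo f (Icc 0 1) {x | x ∈ l} ∧
      (∀ s ∈ Icc (0 : ℝ) 1, ∀ t ∈ Icc (0 : ℝ) 1,
        dist (f s) (f t) ≤ (l.length - 1 : ℕ) * c * dist s t + c) ∧
      ∀ x ∈ l, ∃ t ∈ Icc (0 : ℝ) 1, f t = x := by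
  set m := l.length - 1
  have hm : m < l.length := by have := List.length_pos_iff.2 hl; omega
  set w : ℕ → X := fun i => l.getD i (l.head hl)
  have hw : ∀ (i) (hi : i ≤ m), w i = l[i]'(hi.trans_lt hm) := fun i hi =>
    List.getD_eq_getElem _ _ _
  have hstep : ∀ i < m, dist (w i) (w (i + 1)) ≤ c := fun i hi => by
    rw [hw i hi.le, hw (i + 1) hi]
    exact hchain.getElem i (by omega)
  have hscale : ∀ t ∈ Icc (0 : ℝ) 1, (m : ℝ) * t ∈ Icc 0 (m : ℝ) := fun t ht =>
    ⟨mul_nonneg m.cast_nonneg ht.1, mul_le_of_le_one_right m.cast_nonneg ht.2⟩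
  refine ⟨fun t => w ⌊m * t⌋₊, fun t ht => ?_, fun s hs t ht => ?_, fun x hx => ?_⟩
  · change w _ ∈ l
    rw [hw _ (Nat.floor_le_of_le (hscale t ht).2)]
    exact List.getElem_mem _
  · calc _ ≤ c * |m * s - m * t| + c := dist_comp_floor_le hc hstep (hscale s hs) (hscale t ht)
      _ = m * c * dist s t + c := by rw [← mul_sub, abs_mul, Nat.abs_cast, Real.dist_eq]; ring
  · obtain ⟨i, hi, rfl⟩ := List.mem_iff_getElem.1 hx
    have him : i ≤ m := by omega
    refine ⟨i / m, ⟨by positivity, div_le_one_of_le₀ (by exact_mod_cast him) m.cast_nonneg⟩, ?_⟩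
    have : ⌊(m : ℝ) * (i / m)⌋₊ = i := by
      rcases Nat.eq_zero_or_pos m with h | h
      · obtain rfl : i = 0 := by omega
        simp
      · rw [mul_div_cancel₀ _ (by positivity), Nat.floor_natCast]
    simp only [this, hw i him]

theorem IsPreconnected.exists_dist_le_of_isCover {Γ V W : Set X} (hΓ : IsPreconnected Γ)
    (hV : V.Finite) (hW : W.Finite) {ε : ℝ≥0} (hcov : IsCover ε Γ (V ∪ W))
    (hVΓ : (V ∩ Γ).Nonempty) (hWΓ : (W ∩ Γ).Nonempty) :
    ∃ v ∈ V, ∃ w ∈ W, dist v w ≤ 2 * ε := by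
  rw [isCover_iff_subset_iUnion_closedBall, biUnion_union] at hcov
  obtain ⟨v₀, hv₀, hv₀Γ⟩ := hVΓ
  obtain ⟨w₀, hw₀, hw₀Γ⟩ := hWΓ
  obtain ⟨z, -, hzV, hzW⟩ := isPreconnected_closed_iff.1 hΓ _ _
    (hV.isClosed_biUnion fun _ _ => isClosed_closedBall)
    (hW.isClosed_biUnion fun _ _ => isClosed_closedBall) hcov
    ⟨v₀, hv₀Γ, mem_biUnion hv₀ (mem_closedBall_self ε.2)⟩
    ⟨w₀, hw₀Γ, mem_biUnion hw₀ (mem_closedBall_self ε.2)⟩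
  obtain ⟨v, hv, hzv⟩ := mem_iUnion₂.1 hzV
  obtain ⟨w, hw, hzw⟩ := mem_iUnion₂.1 hzW
  have := dist_triangle_left v w z
  exact ⟨v, hv, w, hw, by linarith [mem_closedBall.1 hzv, mem_closedBall.1 hzw]⟩

end

section

variable {X : Type*} [MetricSpace X]

theorem exists_lipschitzOnWith_image_eq_of_approx {Y : Type*} [PseudoMetricSpace Y] [Nonempty X]
    {I : Set Y} (hI : IsCompact I) {Γ : Set X} (hΓ : IsCompact Γ) {K : ℝ≥0}
    (happrox : ∀ δ > 0, ∃ f : Y → X, MapsTo f I Γ ∧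
      (∀ s ∈ I, ∀ t ∈ I, dist (f s) (f t) ≤ K * dist s t + δ) ∧
      ∀ p ∈ Γ, ∃ t ∈ I, dist (f t) p ≤ δ) :
    ∃ γ : Y → X, γ '' I = Γ ∧ LipschitzOnWith K γ I := by
  choose f hfΓ hfK hfp using fun k : ℕ => happrox (1 / (k + 1)) Nat.one_div_pos_of_nat
  set 𝒰 : Ultrafilter ℕ := Ultrafilter.of atTop
  have hδ : Tendsto (fun k : ℕ => 1 / ((k : ℝ) + 1)) 𝒰 (𝓝 0) :=
    tendsto_one_div_add_atTop_nhds_zero_nat.mono_left (Ultrafilter.of_le _)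
  have hlim : ∀ t ∈ I, ∃ x ∈ Γ, Tendsto (fun k => f k t) 𝒰 (𝓝 x) := fun t ht =>
    hΓ.ultrafilter_le_nhds (𝒰.map _) (tendsto_principal.2 (.of_forall fun k => hfΓ k ht))
  choose! γ hγΓ hγ using hlim
  refine ⟨γ, (image_subset_iff.2 hγΓ).antisymm fun p hp => ?_,
    LipschitzOnWith.of_dist_le_mul fun s hs t ht => ?_⟩
  · choose t ht htp using fun k => hfp k p hp
    obtain ⟨t₀, ht₀, htt₀⟩ := hI.ultrafilter_le_nhds (𝒰.map t) (tendsto_principal.2 (.of_forall ht))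
    have hbound : ∀ k, dist (f k (t k)) (γ t₀) ≤
        K * dist (t k) t₀ + 1 / (k + 1) + dist (f k t₀) (γ t₀) := fun k =>
      (dist_triangle _ _ _).trans (add_le_add_left (hfK k _ (ht k) t₀ ht₀) _)
    have hbound₀ : Tendsto (fun k : ℕ => K * dist (t k) t₀ + 1 / ((k : ℝ) + 1) +
        dist (f k t₀) (γ t₀)) 𝒰 (𝓝 0) := by
      simpa using (((tendsto_iff_dist_tendsto_zero.1 htt₀).const_mul (K : ℝ)).add hδ).add
        (tendsto_iff_dist_tendsto_zero.1 (hγ t₀ ht₀))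
    refine ⟨t₀, ht₀, tendsto_nhds_unique (f := fun k => f k (t k)) (l := 𝒰) ?_ ?_⟩
    · exact tendsto_iff_dist_tendsto_zero.2 (squeeze_zero (fun _ => dist_nonneg) hbound hbound₀)
    · exact tendsto_iff_dist_tendsto_zero.2 (squeeze_zero (fun _ => dist_nonneg) htp hδ)
  · refine le_of_tendsto_of_tendsto' ((hγ s hs).dist (hγ t ht)) ?_ fun k => hfK k s hs t ht
    simpa using hδ.const_add ((K : ℝ) * dist s t)

variable [MeasurableSpace X] [BorelSpace X]

theorem ofReal_le_hausdorffMeasure_inter_closedBall {Γ : Set X} (hΓ : IsPreconnected Γ)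
    {x y : X} (hx : x ∈ Γ) (hy : y ∈ Γ) {r : ℝ} (hr : r ≤ dist x y) :
    ENNReal.ofReal r ≤ μH[1] (Γ ∩ closedBall x r) := by
  have hf : LipschitzWith 1 (dist · x) := LipschitzWith.dist_left x
  have hIcc : Icc 0 r ⊆ (dist · x) '' (Γ ∩ closedBall x r) := by
    intro v hv
    obtain ⟨z, hz, rfl⟩ := (hΓ.image _ hf.continuous.continuousOn).Icc_subset
      ⟨x, hx, dist_self x⟩ ⟨y, hy, rfl⟩ ⟨hv.1, hv.2.trans (hr.trans_eq (dist_comm x y))⟩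
    exact ⟨z, ⟨hz, hv.2⟩, rfl⟩
  calc ENNReal.ofReal r = μH[1] (Icc 0 r) := by simp [hausdorffMeasure_real]
    _ ≤ μH[1] ((dist · x) '' (Γ ∩ closedBall x r)) := measure_mono hIcc
    _ ≤ μH[1] (Γ ∩ closedBall x r) := by simpa using hf.hausdorffMeasure_image_le zero_le_one _

theorem card_mul_le_hausdorffMeasure {Γ : Set X} (hΓc : IsClosed Γ) (hΓ : IsPreconnected Γ)
    {ε : ℝ≥0} {a b : X} (ha : a ∈ Γ) (hb : b ∈ Γ) (hab : ε ≤ dist a b) {S : Finset X}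
    (hSΓ : ↑S ⊆ Γ) (hS : IsSeparated ε (S : Set X)) :
    S.card * ENNReal.ofReal (ε / 2) ≤ μH[1] Γ := by
  have hdisj : (S : Set X).PairwiseDisjoint fun s => Γ ∩ closedBall s (ε / 2) := by
    intro s hs t ht hst
    refine disjoint_left.2 fun z hzs hzt => (hS hs ht hst).not_ge ?_
    rw [edist_dist, ← ENNReal.ofReal_coe_nnreal]
    refine ENNReal.ofReal_le_ofReal ?_
    linarith [dist_triangle s z t, dist_comm s z, mem_closedBall.1 hzs.2, mem_closedBall.1 hzt.2]
  have hball : ∀ s ∈ S, ENNReal.ofReal (ε / 2) ≤ μH[1] (Γ ∩ closedBall s (ε / 2)) := by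
    intro s hs
    rcases le_total (dist a b / 2) (dist s a) with h | h
    · exact ofReal_le_hausdorffMeasure_inter_closedBall hΓ (hSΓ hs) ha (by linarith)
    · exact ofReal_le_hausdorffMeasure_inter_closedBall hΓ (hSΓ hs) hb
        (by linarith [dist_triangle_left a b s])
  calc S.card * ENNReal.ofReal (ε / 2) = ∑ s ∈ S, ENNReal.ofReal (ε / 2) := by simp
    _ ≤ ∑ s ∈ S, μH[1] (Γ ∩ closedBall s (ε / 2)) := Finset.sum_le_sum hball
    _ = μH[1] (⋃ s ∈ S, Γ ∩ closedBall s (ε / 2)) :=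
      (measure_biUnion_finset hdisj fun s _ => (hΓc.inter isClosed_closedBall).measurableSet).symm
    _ ≤ μH[1] Γ := measure_mono (iUnion₂_subset fun _ _ => inter_subset_left)

theorem exists_approx_curve_of_le_dist {Γ : Set X} (hc : IsCompact Γ) (hconn : IsPreconnected Γ)
    (hH : μH[1] Γ ≠ ⊤) {a b : X} (ha : a ∈ Γ) (hb : b ∈ Γ) {ε : ℝ≥0} (hε : ε ≠ 0)
    (hab : ε ≤ dist a b) :
    ∃ f : ℝ → X, MapsTo f (Icc 0 1) Γ ∧
      (∀ s ∈ Icc (0 : ℝ) 1, ∀ t ∈ Icc (0 : ℝ) 1,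
        dist (f s) (f t) ≤ 8 * (μH[1] Γ).toReal * dist s t + 2 * ε) ∧
      ∀ p ∈ Γ, ∃ t ∈ Icc (0 : ℝ) 1, dist (f t) p ≤ ε := by
  classical
  obtain ⟨S, hSΓ, hsep, hcov⟩ := hc.totallyBounded.exists_finset_isSeparated_isCover hε
  have hcard : (S.card : ℝ) * ε ≤ 2 * (μH[1] Γ).toReal := by
    have := ENNReal.toReal_mono hH <|
      card_mul_le_hausdorffMeasure hc.isClosed hconn ha hb hab hSΓ hsep
    rw [ENNReal.toReal_mul, ENNReal.toReal_ofReal (by positivity)] at this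
    rw [ENNReal.toReal_natCast] at this
    linarith
  have hexp : ∀ V ⊆ S, V.Nonempty → V ≠ S → ∃ v ∈ V, ∃ s ∈ S, s ∉ V ∧ dist v s ≤ 2 * ε := by
    intro V hVS ⟨v₀, hv₀⟩ hVne
    obtain ⟨s₀, hs₀S, hs₀V⟩ := Finset.exists_of_ssubset (hVS.ssubset_of_ne hVne)
    obtain ⟨v, hv, s, hs, hvs⟩ := hconn.exists_dist_le_of_isCover V.finite_toSet
      (S \ V).finite_toSet (by rwa [← Finset.coe_union, Finset.union_sdiff_of_subset hVS])
      ⟨v₀, hv₀, hSΓ (hVS hv₀)⟩ ⟨s₀, by simp [hs₀S, hs₀V], hSΓ hs₀S⟩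
    rw [Finset.mem_coe, Finset.mem_sdiff] at hs
    exact ⟨v, hv, s, hs.1, hs.2, hvs⟩
  have hnear : ∀ p ∈ Γ, ∃ s ∈ S, dist p s ≤ ε := fun p hp => by
    simpa using isCover_iff_subset_iUnion_closedBall.1 hcov hp
  have hSne : S.Nonempty := let ⟨s, hs, _⟩ := hnear a ha; ⟨s, hs⟩
  obtain ⟨l, hl, hlS, hlen⟩ := Finset.exists_isChain_toFinset_eq
    (R := fun x y => dist x y ≤ 2 * ε) (fun x y h => by rwa [dist_comm]) hSne hexp
  have hlne : l ≠ [] := by rintro rfl; exact hSne.ne_empty (by simpa using hlS.symm)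
  obtain ⟨f, hfl, hfK, hlf⟩ := List.exists_curve_of_isChain hlne (by positivity) hl
  refine ⟨f, fun t ht => hSΓ (by simpa [← hlS] using hfl ht), fun s hs t ht => ?_, fun p hp => ?_⟩
  · have hm : ((l.length - 1 : ℕ) : ℝ) * (2 * ε) ≤ 8 * (μH[1] Γ).toReal := by
      have : ((l.length - 1 : ℕ) : ℝ) ≤ 2 * S.card := by norm_cast; omega
      nlinarith [ε.2]
    calc dist (f s) (f t) ≤ (l.length - 1 : ℕ) * (2 * ε) * dist s t + 2 * ε := hfK s hs t ht
      _ ≤ 8 * (μH[1] Γ).toReal * dist s t + 2 * ε := by gcongr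
  · obtain ⟨x, hx, hpx⟩ := hnear p hp
    obtain ⟨t, ht, rfl⟩ := hlf x (by simpa [← hlS] using hx)
    exact ⟨t, ht, by rwa [dist_comm]⟩

theorem exists_approx_curve {Γ : Set X} (hc : IsCompact Γ) (hconn : IsConnected Γ)
    (hH : μH[1] Γ ≠ ⊤) {δ : ℝ} (hδ : 0 < δ) :
    ∃ f : ℝ → X, MapsTo f (Icc 0 1) Γ ∧
      (∀ s ∈ Icc (0 : ℝ) 1, ∀ t ∈ Icc (0 : ℝ) 1,
        dist (f s) (f t) ≤ (8 * (μH[1] Γ).toNNReal : ℝ≥0) * dist s t + δ) ∧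
      ∀ p ∈ Γ, ∃ t ∈ Icc (0 : ℝ) 1, dist (f t) p ≤ δ := by
  obtain ⟨x, hx⟩ := hconn.nonempty
  rcases Γ.subsingleton_or_nontrivial with hsub | ⟨a, ha, b, hb, hab⟩
  · refine ⟨fun _ => x, fun _ _ => hx, fun s _ t _ => by simp; positivity,
      fun p hp => ⟨0, ⟨le_rfl, zero_le_one⟩, by simp [hsub hx hp, hδ.le]⟩⟩
  set ε : ℝ≥0 := ⟨min (δ / 2) (dist a b), by positivity⟩
  have hε₀ : 0 < ε := NNReal.coe_pos.1 (lt_min (by positivity) (dist_pos.2 hab))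
  have hε : (ε : ℝ) ≤ δ / 2 := min_le_left _ _
  obtain ⟨f, hfΓ, hfK, hfp⟩ := exists_approx_curve_of_le_dist hc hconn.isPreconnected hH ha hb
    hε₀.ne' (min_le_right _ _)
  refine ⟨f, hfΓ, fun s hs t ht => ?_, fun p hp => ?_⟩
  · rw [NNReal.coe_mul, NNReal.coe_ofNat, ENNReal.coe_toNNReal_eq_toReal]
    linarith [hfK s hs t ht]
  · obtain ⟨t, ht, hpt⟩ := hfp p hp
    exact ⟨t, ht, by linarith⟩

end

open MeasureTheory in
theorem stmt_16_general {X : Type*} [MetricSpace X] [MeasurableSpace X] [BorelSpace X]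
    (Γ : Set X) (hc : IsCompact Γ) (hconn : IsConnected Γ) (hH : μH[1] Γ < ⊤) :
    ∃ γ : ℝ → X, γ '' Set.Icc 0 1 = Γ ∧
      LipschitzOnWith (32 * (μH[1] Γ).toNNReal) γ (Set.Icc 0 1) := by
  have : Nonempty X := ⟨hconn.nonempty.some⟩
  obtain ⟨γ, himage, hlip⟩ := exists_lipschitzOnWith_image_eq_of_approx isCompact_Icc hc
    fun δ hδ => exists_approx_curve hc hconn hH.ne hδ
  exact ⟨γ, himage, hlip.weaken (by gcongr; norm_num)⟩

open MeasureTheory in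
theorem stmt_16 {X : Type*} [MetricSpace X] [MeasurableSpace X] [BorelSpace X]
    (hgeo : ∀ x y : X, ∃ g : ℝ → X, g 0 = x ∧ g (dist x y) = y ∧
      ∀ s ∈ Set.Icc 0 (dist x y), ∀ t ∈ Set.Icc 0 (dist x y),
        dist (g s) (g t) = |s - t|)
    (Γ : Set X) (hc : IsCompact Γ) (hconn : IsConnected Γ) (hH : μH[1] Γ < ⊤) :
    ∃ γ : ℝ → X, γ '' Set.Icc 0 1 = Γ ∧
      LipschitzOnWith (32 * (μH[1] Γ).toNNReal) γ (Set.Icc 0 1) :=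
  stmt_16_general Γ hc hconn hH
end

section
/- Let 𝒯 be a collection of subsets of a metric space such that each T ∈ 𝒯 carries a scale index i(T) ∈ ℕ with m^{-i(T)}/10 ≤ diam(T) ≤ C m · m^{-i(T)} and m^{-i(T)}/10 ≤ dist(T, E) ≤ C m · m^{-i(T)} for a fixed set E, and such that any two distinct sets of the same index are disjoint. Then every point lies in at most 1 + log(20C m)/log(m) elements of 𝒯; in particular 𝒯 is N-overlapping with N depending only on C (and not on m when m ≥ 2). -/
theorem stmt_18 {X : Type*} [MetricSpace X]
    (m : ℕ) (hm : 2 ≤ m) (C : ℝ) (hC : 1 ≤ C)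
    (ι : Type*) (T : ι → Set X) (idx : ι → ℕ) (E : Set X)
    (hdiam : ∀ j, (m : ℝ) ^ (-(idx j : ℤ)) / 10 ≤ Metric.diam (T j) ∧
      Metric.diam (T j) ≤ C * m * (m : ℝ) ^ (-(idx j : ℤ)))
    (hdistlow : ∀ j, ∀ t ∈ T j, ∀ e ∈ E,
      (m : ℝ) ^ (-(idx j : ℤ)) / 10 ≤ dist t e)
    (hdisthigh : ∀ j, ∃ t ∈ T j, ∃ e ∈ E,
      dist t e ≤ C * m * (m : ℝ) ^ (-(idx j : ℤ)))
    (hdisj : ∀ j j', idx j = idx j' → T j ≠ T j' → Disjoint (T j) (T j')) :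
    ∀ (x : X) (s : Finset (Set X)),
      (∀ A ∈ s, x ∈ A ∧ ∃ j, T j = A) →
      ((s.card : ℝ) ≤ 1 + Real.log (20 * C * m) / Real.log m ∧
       (s.card : ℝ) ≤ 2 + Real.log (20 * C) / Real.log 2) := by
  intro x s hs
  have hm1 : (1 : ℝ) < m := by exact_mod_cast Nat.lt_of_lt_of_le one_lt_two hm
  have hm0 : (0 : ℝ) < m := lt_trans one_pos hm1
  have hlogm : 0 < Real.log m := Real.log_pos hm1
  have hlog2 : 0 < Real.log 2 := Real.log_pos one_lt_two
  have h20C : (1 : ℝ) ≤ 20 * C := by nlinarith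
  have hlog20C : 0 ≤ Real.log (20 * C) := Real.log_nonneg h20C
  have hlogsum : Real.log (20 * C * m) = Real.log (20 * C) + Real.log m :=
    Real.log_mul (by nlinarith) (ne_of_gt hm0)
  -- second bound follows from first
  have hsecond : 1 + Real.log (20 * C * m) / Real.log m
      ≤ 2 + Real.log (20 * C) / Real.log 2 := by
    rw [hlogsum]
    have h1 : (Real.log (20 * C) + Real.log m) / Real.log m
        = Real.log (20 * C) / Real.log m + 1 := by
      field_simp
    rw [h1]
    have h2 : Real.log (20 * C) / Real.log m ≤ Real.log (20 * C) / Real.log 2 :=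
      div_le_div_of_nonneg_left hlog20C hlog2
        (Real.log_le_log two_pos (by exact_mod_cast hm))
    linarith
  have hL : 0 ≤ Real.log (20 * C * m) / Real.log m := by
    apply div_nonneg _ hlogm.le
    rw [hlogsum]; linarith
  -- key inequality
  have key : ∀ j j', x ∈ T j → x ∈ T j' →
      ((idx j : ℝ)) - (idx j' : ℝ) ≤ Real.log (20 * C * m) / Real.log m := by
    intro j j' hxj hxj'
    obtain ⟨t, ht, e, he, hte⟩ := hdisthigh j
    have hb : Bornology.IsBounded (T j) := by
      by_contra hub
      have := (hdiam j).1
      rw [Metric.diam_eq_zero_of_unbounded hub] at this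
      have : (0:ℝ) < (m : ℝ) ^ (-(idx j : ℤ)) := zpow_pos hm0 _
      linarith
    have hxt : dist x t ≤ Metric.diam (T j) := Metric.dist_le_diam_of_mem hb hxj ht
    have hxe : dist x e ≤ 2 * (C * m * (m : ℝ) ^ (-(idx j : ℤ))) := by
      have := (hdiam j).2
      calc dist x e ≤ dist x t + dist t e := dist_triangle x t e
        _ ≤ _ := by linarith
    have hlow : (m : ℝ) ^ (-(idx j' : ℤ)) / 10 ≤ dist x e :=
      hdistlow j' x hxj' e he
    have hmain : (m : ℝ) ^ (-(idx j' : ℤ)) ≤ 20 * C * m * (m : ℝ) ^ (-(idx j : ℤ)) := by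
      nlinarith
    have hpow : (m : ℝ) ^ ((idx j : ℤ) - (idx j' : ℤ)) ≤ 20 * C * m := by
      have hpos : (0:ℝ) < (m : ℝ) ^ (-(idx j : ℤ)) := zpow_pos hm0 _
      rw [show (idx j : ℤ) - (idx j' : ℤ) = (-(idx j' : ℤ)) - (-(idx j : ℤ)) by ring,
        zpow_sub₀ (ne_of_gt hm0)]
      rw [div_le_iff₀ hpos]
      linarith
    have hlog := Real.log_le_log (zpow_pos hm0 _) hpow
    rw [Real.log_zpow] at hlog
    push_cast at hlog
    rw [le_div_iff₀ hlogm]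
    linarith
  rcases s.eq_empty_or_nonempty with rfl | hne
  · simp only [Finset.card_empty, Nat.cast_zero]
    constructor <;> linarith
  · have h2 : ∀ A ∈ s, ∃ j, T j = A := fun A hA => (hs A hA).2
    have : Nonempty ι := ⟨(h2 hne.choose hne.choose_spec).choose⟩
    choose! j hj using h2
    have hinj : Set.InjOn (fun A => idx (j A)) s := by
      intro A hA A' hA' hEq
      by_contra hne'
      have hTne : T (j A) ≠ T (j A') := by
        rw [hj A hA, hj A' hA']; exact hne'
      have hd := hdisj (j A) (j A') hEq hTne
      have hxA : x ∈ T (j A) := by rw [hj A hA]; exact (hs A hA).1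
      have hxA' : x ∈ T (j A') := by rw [hj A' hA']; exact (hs A' hA').1
      exact (Set.disjoint_left.1 hd hxA) hxA'
    set u := s.image (fun A => idx (j A)) with hu
    have hcard : s.card = u.card := (Finset.card_image_of_injOn hinj).symm
    have hune : u.Nonempty := hne.image _
    set a := u.min' hune
    set b := u.max' hune
    have hsub : u ⊆ Finset.Icc a b := fun i hi =>
      Finset.mem_Icc.2 ⟨u.min'_le i hi, u.le_max' i hi⟩
    have hab : a ≤ b := u.min'_le b (u.max'_mem hune)
    have hcard2 : u.card ≤ b - a + 1 := by
      have := Finset.card_le_card hsub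
      rwa [Nat.card_Icc, Nat.sub_add_comm hab] at this
    obtain ⟨Aa, hAa, hAa2⟩ := Finset.mem_image.1 (u.min'_mem hune)
    obtain ⟨Ab, hAb, hAb2⟩ := Finset.mem_image.1 (u.max'_mem hune)
    have hxa : x ∈ T (j Aa) := by rw [hj Aa hAa]; exact (hs Aa hAa).1
    have hxb : x ∈ T (j Ab) := by rw [hj Ab hAb]; exact (hs Ab hAb).1
    have hkey := key (j Ab) (j Aa) hxb hxa
    rw [hAa2, hAb2] at hkey
    have hcardR : (s.card : ℝ) ≤ (b : ℝ) - a + 1 := by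
      rw [hcard]
      have : (u.card : ℝ) ≤ ((b - a + 1 : ℕ) : ℝ) := by exact_mod_cast hcard2
      rw [Nat.cast_add, Nat.cast_sub hab, Nat.cast_one] at this
      linarith
    constructor
    · linarith
    · linarith
end
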